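/- Define K(r, V) = inf over all real random variables Π with E[Π] ≥ r and Var(Π) ≤ V of E[Φ(Π)], where Φ is the standard Gaussian CDF. Then for fixed V > 0, K(r, V) is strictly increasing in r. -/

import Mathlib

/-
Shifting a feasible law for `r₂` down by `δ = r₂ - r₁` gives a feasible law for `r₁`, so
`K(r₁, V) ≤ E[Φ(Π - δ)]` whenever `Π` is feasible for `r₂`; the point is to make the gain
`E[Φ(Π)] - E[Φ(Π - δ)]` uniform. By Chebyshev, a fixed fraction of the mass of `Π` lies within
a fixed distance of its mean `m`. If `m` is bounded, `Φ(x) - Φ(x - δ)` is bounded below there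
by `δ` times the Gaussian density on a bounded interval. If `m` is large, `E[Φ(Π)]` is close
to `1`, hence above `K(r₁, V) ≤ Φ(r₁) < 1`.
-/

open MeasureTheory ProbabilityTheory

/-- Standard Gaussian density. -/
noncomputable def gaussPDF (x : ℝ) : ℝ := Real.exp (-(x ^ 2) / 2) / Real.sqrt (2 * Real.pi)

/-- Standard Gaussian CDF. -/
noncomputable def gaussCDF (x : ℝ) : ℝ := ∫ t in Set.Iic x, gaussPDF t

/-- `K(r, V)`: infimum of `E[Φ(Π)]` over laws `μ` of real random variables `Π`
with `E[Π] ≥ r` and `Var(Π) ≤ V`. -/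
noncomputable def Kfun (r V : ℝ) : ℝ :=
  sInf { e : ℝ | ∃ μ : Measure ℝ, IsProbabilityMeasure μ ∧ MemLp id 2 μ ∧
    r ≤ ∫ x, x ∂μ ∧ variance id μ ≤ V ∧ e = ∫ x, gaussCDF x ∂μ }

open Filter Topology

lemma gaussPDF_eq_gaussianPDFReal : gaussPDF = gaussianPDFReal 0 1 := by
  funext x
  simp [gaussPDF, gaussianPDFReal, div_eq_inv_mul]

lemma gaussPDF_pos (x : ℝ) : 0 < gaussPDF x :=
  gaussPDF_eq_gaussianPDFReal ▸ gaussianPDFReal_pos 0 1 x one_ne_zero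

lemma integrable_gaussPDF : Integrable gaussPDF :=
  gaussPDF_eq_gaussianPDFReal ▸ integrable_gaussianPDFReal 0 1

lemma gaussPDF_le_gaussPDF_of_abs_le {x y : ℝ} (h : |x| ≤ |y|) : gaussPDF y ≤ gaussPDF x := by
  have : x ^ 2 ≤ y ^ 2 := sq_le_sq.2 h
  unfold gaussPDF
  gcongr

lemma gaussCDF_eq_cdf : gaussCDF = cdf (gaussianReal 0 1) := by
  funext x
  rw [cdf_eq_real, measureReal_def, gaussianReal_apply_eq_integral _ one_ne_zero,
    ENNReal.toReal_ofReal (setIntegral_nonneg measurableSet_Iic fun t _ ↦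
      gaussianPDFReal_nonneg 0 1 t), gaussCDF, gaussPDF_eq_gaussianPDFReal]

lemma gaussCDF_nonneg (x : ℝ) : 0 ≤ gaussCDF x := gaussCDF_eq_cdf ▸ cdf_nonneg _ x

lemma gaussCDF_le_one (x : ℝ) : gaussCDF x ≤ 1 := gaussCDF_eq_cdf ▸ cdf_le_one _ x

lemma monotone_gaussCDF : Monotone gaussCDF := gaussCDF_eq_cdf ▸ (cdf _).mono

lemma tendsto_gaussCDF_atTop : Tendsto gaussCDF atTop (𝓝 1) :=
  gaussCDF_eq_cdf ▸ tendsto_cdf_atTop _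

lemma sub_mul_gaussPDF_le_gaussCDF_sub {a b R : ℝ} (hab : a ≤ b) (ha : |a| ≤ R) (hb : |b| ≤ R) :
    (b - a) * gaussPDF R ≤ gaussCDF b - gaussCDF a := by
  calc (b - a) * gaussPDF R = ∫ _ in a..b, gaussPDF R := by simp
    _ ≤ ∫ t in a..b, gaussPDF t :=
      intervalIntegral.integral_mono_on hab intervalIntegrable_const
        integrable_gaussPDF.intervalIntegrable fun t ht ↦ gaussPDF_le_gaussPDF_of_abs_le
          (((abs_le_max_abs_abs ht.1 ht.2).trans (max_le ha hb)).trans (le_abs_self R))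
    _ = gaussCDF b - gaussCDF a :=
      (intervalIntegral.integral_Iic_sub_Iic integrable_gaussPDF.integrableOn
        integrable_gaussPDF.integrableOn).symm

lemma gaussCDF_lt_one (x : ℝ) : gaussCDF x < 1 := by
  have h := sub_mul_gaussPDF_le_gaussCDF_sub (by linarith : x ≤ x + 1)
    (le_max_left |x| |x + 1|) (le_max_right _ _)
  linarith [gaussPDF_pos (max |x| |x + 1|), gaussCDF_le_one (x + 1)]

lemma integrable_gaussCDF_comp {μ : Measure ℝ} [IsFiniteMeasure μ] {f : ℝ → ℝ}
    (hf : Measurable f) : Integrable (fun x ↦ gaussCDF (f x)) μ :=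
  (integrable_const (1 : ℝ)).mono' (monotone_gaussCDF.measurable.comp hf).aestronglyMeasurable
    (ae_of_all _ fun x ↦ by
      rw [Real.norm_of_nonneg (gaussCDF_nonneg _)]; exact gaussCDF_le_one _)

section Chebyshev

variable {μ : Measure ℝ} [IsProbabilityMeasure μ]

lemma one_sub_variance_div_sq_le_measureReal_ball (hμ : MemLp id 2 μ) {C : ℝ} (hC : 0 < C) :
    1 - variance id μ / C ^ 2 ≤ μ.real (Metric.ball (∫ x, x ∂μ) C) := by
  have hball : MeasurableSet (Metric.ball (∫ x, x ∂μ) C) := measurableSet_ball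
  have hcompl : {x | C ≤ |id x - μ[id]|} = (Metric.ball (∫ x, x ∂μ) C)ᶜ := by
    ext x; simp [Real.dist_eq]
  have h := meas_ge_le_variance_div_sq hμ hC
  rw [hcompl] at h
  have := ENNReal.toReal_le_of_le_ofReal
    (div_nonneg (variance_nonneg _ _) (sq_nonneg C)) h
  rw [← measureReal_def, probReal_compl_eq_one_sub hball] at this
  linarith

lemma mul_le_integral_of_le_on_ball (hμ : MemLp id 2 μ) {f : ℝ → ℝ} (hf : Integrable f μ)
    (hf0 : 0 ≤ f) {C c : ℝ} (hC : 0 < C) (hc : 0 ≤ c)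
    (hfc : ∀ x ∈ Metric.ball (∫ x, x ∂μ) C, c ≤ f x) :
    (1 - variance id μ / C ^ 2) * c ≤ ∫ x, f x ∂μ :=
  calc (1 - variance id μ / C ^ 2) * c ≤ c * μ.real (Metric.ball (∫ x, x ∂μ) C) := by
        rw [mul_comm]
        exact mul_le_mul_of_nonneg_left (one_sub_variance_div_sq_le_measureReal_ball hμ hC) hc
    _ ≤ ∫ x in Metric.ball (∫ x, x ∂μ) C, f x ∂μ :=
        setIntegral_ge_of_const_le_real measurableSet_ball (measure_ne_top _ _) hfc hf.integrableOn
    _ ≤ ∫ x, f x ∂μ := setIntegral_le_integral hf (ae_of_all _ hf0)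

end Chebyshev

def IsFeasible (r V : ℝ) (μ : Measure ℝ) : Prop :=
  IsProbabilityMeasure μ ∧ MemLp id 2 μ ∧ r ≤ ∫ x, x ∂μ ∧ variance id μ ≤ V

lemma Kfun_le_integral {r V : ℝ} {μ : Measure ℝ} (hμ : IsFeasible r V μ) :
    Kfun r V ≤ ∫ x, gaussCDF x ∂μ := by
  obtain ⟨hprob, hL2, hmean, hvar⟩ := hμ
  refine csInf_le ⟨0, ?_⟩ ⟨μ, hprob, hL2, hmean, hvar, rfl⟩
  rintro _ ⟨ν, -, -, -, -, rfl⟩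
  exact integral_nonneg fun x ↦ gaussCDF_nonneg x

lemma le_Kfun {r V c : ℝ} (hne : ∃ μ, IsFeasible r V μ)
    (h : ∀ μ, IsFeasible r V μ → c ≤ ∫ x, gaussCDF x ∂μ) : c ≤ Kfun r V := by
  obtain ⟨μ, hprob, hL2, hmean, hvar⟩ := hne
  refine le_csInf ⟨_, μ, hprob, hL2, hmean, hvar, rfl⟩ ?_
  rintro _ ⟨ν, hprob, hL2, hmean, hvar, rfl⟩
  exact h ν ⟨hprob, hL2, hmean, hvar⟩

lemma isFeasible_dirac (r : ℝ) {V : ℝ} (hV : 0 ≤ V) : IsFeasible r V (Measure.dirac r) := by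
  refine ⟨inferInstance, (memLp_const r).ae_eq (ae_eq_dirac id).symm, ?_, ?_⟩
  · rw [integral_dirac]
  · rwa [variance_dirac]

lemma isFeasible_map_sub {r V δ : ℝ} {μ : Measure ℝ} (hμ : IsFeasible (r + δ) V μ) :
    IsFeasible r V (μ.map (· - δ)) := by
  obtain ⟨hprob, hL2, hmean, hvar⟩ := hμ
  have hmeas : Measurable (· - δ : ℝ → ℝ) := measurable_id.sub_const δ
  refine ⟨Measure.isProbabilityMeasure_map hmeas.aemeasurable, ?_, ?_, ?_⟩
  · rw [memLp_map_measure_iff aestronglyMeasurable_id hmeas.aemeasurable]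
    exact hL2.sub (memLp_const δ)
  · rw [integral_map hmeas.aemeasurable measurable_id'.aestronglyMeasurable,
      integral_sub (f := fun x ↦ x) (hL2.integrable one_le_two) (integrable_const δ)]
    simp only [integral_const, probReal_univ, smul_eq_mul, one_mul]
    linarith
  · rw [variance_id_map hmeas.aemeasurable]
    exact (variance_sub_const hL2.1 δ).trans_le hvar

lemma integral_gaussCDF_map_sub {μ : Measure ℝ} (δ : ℝ) :
    ∫ x, gaussCDF x ∂(μ.map (· - δ)) = ∫ x, gaussCDF (x - δ) ∂μ :=
  integral_map (measurable_id.sub_const δ).aemeasurable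
    monotone_gaussCDF.measurable.aestronglyMeasurable

lemma exists_le_integral_gaussCDF_of_le_mean {V b : ℝ} (hV : 0 < V) (hb : b < 1) :
    ∃ M, ∀ μ : Measure ℝ, IsProbabilityMeasure μ → MemLp id 2 μ → variance id μ ≤ V →
      M ≤ ∫ x, x ∂μ → b ≤ ∫ x, gaussCDF x ∂μ := by
  obtain ⟨t, ht, rfl⟩ : ∃ t, 0 < t ∧ b = 1 - 2 * t := ⟨(1 - b) / 2, by linarith, by ring⟩
  set C := Real.sqrt (V / t)
  have hC : 0 < C := Real.sqrt_pos.2 (div_pos hV ht)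
  have hCt : V / C ^ 2 = t := by
    rw [Real.sq_sqrt (div_pos hV ht).le]; field_simp
  obtain ⟨x₀, hx₀⟩ := (tendsto_gaussCDF_atTop.eventually
    (eventually_ge_nhds (by linarith : 1 - t < 1))).exists_forall_of_atTop
  refine ⟨x₀ + C, fun μ _ hL2 hvar hM ↦ ?_⟩
  have hball : ∀ x ∈ Metric.ball (∫ x, x ∂μ) C, gaussCDF x₀ ≤ gaussCDF x := fun x hx ↦
    monotone_gaussCDF (by rw [Metric.mem_ball, Real.dist_eq, abs_lt] at hx; linarith)
  have h := mul_le_integral_of_le_on_ball hL2 (integrable_gaussCDF_comp measurable_id')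
    (fun x ↦ gaussCDF_nonneg x) hC (gaussCDF_nonneg x₀) hball
  have hvt : variance id μ / C ^ 2 ≤ t := hCt ▸ by gcongr
  have h₀ := hx₀ x₀ le_rfl
  have h₁ := gaussCDF_le_one x₀
  nlinarith [mul_le_mul_of_nonneg_right hvt (gaussCDF_nonneg x₀),
    mul_nonneg ht.le (sub_nonneg.2 h₁)]

lemma exists_pos_add_integral_gaussCDF_sub_le {V δ lo hi : ℝ} (hV : 0 < V) (hδ : 0 < δ) :
    ∃ ε > 0, ∀ μ : Measure ℝ, IsProbabilityMeasure μ → MemLp id 2 μ → variance id μ ≤ V →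
      lo ≤ ∫ x, x ∂μ → ∫ x, x ∂μ ≤ hi →
        ε + ∫ x, gaussCDF (x - δ) ∂μ ≤ ∫ x, gaussCDF x ∂μ := by
  set C := Real.sqrt (2 * V)
  have hC : 0 < C := Real.sqrt_pos.2 (by positivity)
  have hCV : V / C ^ 2 = 1 / 2 := by
    rw [Real.sq_sqrt (by positivity)]; field_simp
  set R := max |lo - C - δ| |hi + C|
  have hgap : 0 < δ * gaussPDF R := mul_pos hδ (gaussPDF_pos R)
  refine ⟨δ * gaussPDF R / 2, by positivity, fun μ _ hL2 hvar hlo hhi ↦ ?_⟩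
  have hint := integrable_gaussCDF_comp (μ := μ) measurable_id'
  have hint_sub := integrable_gaussCDF_comp (μ := μ) (measurable_id'.sub_const δ)
  have hball : ∀ x ∈ Metric.ball (∫ x, x ∂μ) C,
      δ * gaussPDF R ≤ gaussCDF x - gaussCDF (x - δ) := fun x hx ↦ by
    rw [Metric.mem_ball, Real.dist_eq, abs_lt] at hx
    have h := sub_mul_gaussPDF_le_gaussCDF_sub (R := R) (by linarith : x - δ ≤ x)
      (abs_le_max_abs_abs (by linarith) (by linarith))
      (abs_le_max_abs_abs (by linarith) (by linarith))
    rwa [sub_sub_cancel] at h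
  have h := mul_le_integral_of_le_on_ball (f := fun x ↦ gaussCDF x - gaussCDF (x - δ)) hL2
    (hint.sub hint_sub)
    (fun x ↦ sub_nonneg.2 (monotone_gaussCDF (by linarith))) hC hgap.le hball
  have hvC : variance id μ / C ^ 2 ≤ 1 / 2 := hCV ▸ by gcongr
  rw [integral_sub hint hint_sub] at h
  nlinarith [mul_le_mul_of_nonneg_right hvC hgap.le]

/-- For fixed `V > 0`, `K(r, V)` is strictly increasing in `r`. -/
theorem stmt1 {V : ℝ} (hV : 0 < V) {r₁ r₂ : ℝ} (h : r₁ < r₂) :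
    Kfun r₁ V < Kfun r₂ V := by
  have hq : Kfun r₁ V ≤ gaussCDF r₁ :=
    (Kfun_le_integral (isFeasible_dirac r₁ hV.le)).trans_eq (integral_dirac _ _)
  have hq₁ := gaussCDF_lt_one r₁
  obtain ⟨M, hfar⟩ :=
    exists_le_integral_gaussCDF_of_le_mean hV (by linarith : (gaussCDF r₁ + 1) / 2 < 1)
  obtain ⟨ε, hε, hnear⟩ :=
    exists_pos_add_integral_gaussCDF_sub_le (lo := r₂) (hi := M) hV (sub_pos.2 h)
  suffices Kfun r₁ V + min ε ((1 - gaussCDF r₁) / 2) ≤ Kfun r₂ V by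
    have : 0 < min ε ((1 - gaussCDF r₁) / 2) := lt_min hε (by linarith)
    linarith
  refine le_Kfun ⟨_, isFeasible_dirac r₂ hV.le⟩ fun μ hμ ↦ ?_
  obtain ⟨hprob, hL2, hmean, hvar⟩ := hμ
  rcases le_or_gt M (∫ x, x ∂μ) with hM | hM
  · linarith [hfar μ hprob hL2 hvar hM, min_le_right ε ((1 - gaussCDF r₁) / 2)]
  · have hshift : Kfun r₁ V ≤ ∫ x, gaussCDF (x - (r₂ - r₁)) ∂μ :=
      integral_gaussCDF_map_sub (r₂ - r₁) ▸
        Kfun_le_integral (isFeasible_map_sub ⟨hprob, hL2, by rwa [add_sub_cancel], hvar⟩)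
    linarith [hnear μ hprob hL2 hvar hmean hM.le, min_le_left ε ((1 - gaussCDF r₁) / 2)]
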